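/- arXiv:1605.03086 — 5 statements merged into one kernel-verified Lean document; each statement's English description precedes it below -/
import Mathlib

section
/- If a0 ≥ a1 ≥ ... ≥ at ≥ 1 are integers with a0 + a1 + ... + at = s², where s ≥ 1 is an integer, then 2·∑_{i=0}^{t} √(a_i) − 2s ≥ 2t(1 − 1/s). -/
lemma two_sqrt (x y : ℝ) (hx : 1 ≤ x) (hy : 1 ≤ y) :
    Real.sqrt (x + y - 1) + 1 ≤ Real.sqrt x + Real.sqrt y := by
  have h1 : Real.sqrt (x + y - 1) ≤ Real.sqrt x * Real.sqrt y := by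
    rw [← Real.sqrt_mul (by linarith)]
    exact Real.sqrt_le_sqrt (by nlinarith)
  have hx2 := Real.sq_sqrt (show (0:ℝ) ≤ x by linarith)
  have hy2 := Real.sq_sqrt (show (0:ℝ) ≤ y by linarith)
  have hxs := Real.sqrt_nonneg x
  have hys := Real.sqrt_nonneg y
  have hzs := Real.sqrt_nonneg (x + y - 1)
  have hz2 := Real.sq_sqrt (show (0:ℝ) ≤ x + y - 1 by linarith)
  nlinarith [mul_nonneg (add_nonneg hxs hys) hzs,
    sq_nonneg (Real.sqrt x + Real.sqrt y - Real.sqrt (x+y-1) - 1),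
    sq_nonneg (Real.sqrt x + Real.sqrt y + Real.sqrt (x+y-1) + 1)]

lemma key_sqrt : ∀ (n : ℕ) (b : Fin (n+1) → ℕ), (∀ i, 1 ≤ b i) →
    Real.sqrt ((∑ i, (b i : ℝ)) - n) + n ≤ ∑ i, Real.sqrt (b i) := by
  intro n
  induction n with
  | zero =>
    intro b hb
    simp [Fin.sum_univ_one]
  | succ n ih =>
    intro b hb
    have hS' : (n : ℝ) + 1 ≤ ∑ i : Fin (n+1), (b i.succ : ℝ) := by
      have : ((n:ℝ) + 1) = ∑ _i : Fin (n+1), (1 : ℝ) := by simp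
      rw [this]
      exact Finset.sum_le_sum (fun i _ => by exact_mod_cast hb i.succ)
    have ihb := ih (fun i => b i.succ) (fun i => hb i.succ)
    have h2 := two_sqrt (b 0) ((∑ i : Fin (n+1), (b i.succ : ℝ)) - n)
      (by exact_mod_cast hb 0) (by linarith)
    rw [Fin.sum_univ_succ (f := fun i => Real.sqrt (b i)),
        Fin.sum_univ_succ (f := fun i => (b i : ℝ))]
    have heq : ((b 0 : ℝ) + ∑ i : Fin (n+1), (b i.succ : ℝ)) - (n+1 : ℕ)
        = (b 0 : ℝ) + ((∑ i : Fin (n+1), (b i.succ : ℝ)) - n) - 1 := by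
      push_cast; ring
    rw [heq]
    push_cast
    linarith

theorem stmt_0 (t s : ℕ) (hs : 1 ≤ s) (a : Fin (t + 1) → ℕ)
    (hmono : Antitone a) (hpos : ∀ i, 1 ≤ a i)
    (hsum : ∑ i, a i = s ^ 2) :
    2 * ∑ i, Real.sqrt (a i) - 2 * s ≥ 2 * t * (1 - 1 / s) := by
  have hkey := key_sqrt t a hpos
  have hsumR : (∑ i, (a i : ℝ)) = (s : ℝ) ^ 2 := by exact_mod_cast hsum
  rw [hsumR] at hkey
  have ht : (t : ℝ) + 1 ≤ (s : ℝ) ^ 2 := by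
    have : t + 1 ≤ s ^ 2 := by
      calc t + 1 = ∑ _i : Fin (t+1), 1 := by simp
        _ ≤ ∑ i, a i := Finset.sum_le_sum (fun i _ => hpos i)
        _ = s ^ 2 := hsum
    exact_mod_cast this
  set u : ℝ := (s : ℝ) ^ 2 - t with hu
  have hu1 : 1 ≤ u := by linarith
  have hsR : (1 : ℝ) ≤ (s : ℝ) := by exact_mod_cast hs
  have hsq : Real.sqrt u * Real.sqrt u = u := Real.mul_self_sqrt (by linarith)
  have hle : Real.sqrt u ≤ s := by
    rw [show (s:ℝ) = Real.sqrt ((s:ℝ)^2) from (Real.sqrt_sq (by linarith)).symm]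
    exact Real.sqrt_le_sqrt (by linarith)
  have hdiv : u / s ≤ Real.sqrt u := by
    rw [div_le_iff₀ (by linarith)]
    nlinarith [Real.sqrt_nonneg u]
  have h1s : 1 / (s : ℝ) ≤ 1 := by
    rw [div_le_one (by linarith)]; exact hsR
  have : u / s = (s : ℝ) - t / s := by field_simp [hu]; ring
  rw [ge_iff_le]
  have htpos : (0:ℝ) ≤ t := Nat.cast_nonneg t
  have : 2 * (t:ℝ) * (1 - 1/s) = 2 * t - 2 * (t / s) := by ring
  rw [this]
  have hts : (t:ℝ)/s + Real.sqrt u ≥ s := by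
    have : u / s + (t:ℝ)/s = s := by field_simp [hu]; ring
    linarith
  linarith
end

section
/- If a0 ≥ a1 ≥ ... ≥ at ≥ 1 are integers with a0 + a1 + ... + at = s² for an integer s ≥ 1, and additionally a0 ≥ a1 ≥ 36, then 2·∑_{i=0}^{t} √(a_i) − 2s ≥ 2t(1 − 1/s) + 4. -/
set_option maxHeartbeats 1000000 in

theorem stmt_1 (t s : ℕ) (hs : 1 ≤ s) (ht : 1 ≤ t) (a : Fin (t + 1) → ℕ)
    (hmono : Antitone a) (hpos : ∀ i, 1 ≤ a i)
    (hsum : ∑ i, a i = s ^ 2)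
    (h1 : 36 ≤ a ⟨1, by omega⟩) :
    2 * ∑ i, Real.sqrt (a i) - 2 * s ≥ 2 * t * (1 - 1 / s) + 4 := by
  set i0 : Fin (t + 1) := ⟨0, by omega⟩ with hi0
  set i1 : Fin (t + 1) := ⟨1, by omega⟩ with hi1
  have h1' : 36 ≤ a i1 := h1
  have h0' : 36 ≤ a i0 := le_trans h1' (hmono (by simp [hi0, hi1, Fin.mk_le_mk]))
  have hne : i0 ≠ i1 := by simp [hi0, hi1, Fin.ext_iff]
  set T : Finset (Fin (t + 1)) := Finset.univ \ {i0, i1} with hT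
  have hsub : ({i0, i1} : Finset (Fin (t+1))) ⊆ Finset.univ := Finset.subset_univ _
  have hcard : T.card = t - 1 := by
    rw [hT, Finset.card_sdiff_of_subset hsub, Finset.card_pair hne, Finset.card_univ, Fintype.card_fin]; omega
  have hsplit : ∀ f : Fin (t+1) → ℝ, ∑ i, f i = f i0 + f i1 + ∑ i ∈ T, f i := by
    intro f
    rw [hT, ← Finset.sum_sdiff hsub, Finset.sum_pair hne]; ring
  have hsumR : (a i0 : ℝ) + (a i1 : ℝ) + ∑ i ∈ T, (a i : ℝ) = (s:ℝ)^2 := by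
    rw [← hsplit (fun i => (a i : ℝ)), ← Nat.cast_sum, hsum]; push_cast; ring
  have hub : ∀ i, a i ≤ s ^ 2 := by
    intro i
    calc a i ≤ ∑ j, a j := Finset.single_le_sum (fun j _ => Nat.zero_le _) (Finset.mem_univ i)
    _ = s ^ 2 := hsum
  have h72 : 72 ≤ s ^ 2 := by
    have hle : a i0 + a i1 ≤ ∑ i, a i := by
      rw [← Finset.sum_pair hne]
      exact Finset.sum_le_sum_of_subset hsub
    omega
  have hs9 : 9 ≤ s := by nlinarith
  have hs9R : (9:ℝ) ≤ (s:ℝ) := by exact_mod_cast hs9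
  have hsq : ∀ i, Real.sqrt (a i) ^ 2 = (a i : ℝ) := fun i => Real.sq_sqrt (by positivity)
  have h1le : ∀ i, 1 ≤ Real.sqrt (a i) := by
    intro i
    rw [show (1:ℝ) = Real.sqrt 1 by simp]
    exact Real.sqrt_le_sqrt (by exact_mod_cast hpos i)
  have hles : ∀ i, Real.sqrt (a i) ≤ (s:ℝ) := by
    intro i
    rw [show (s:ℝ) = Real.sqrt ((s:ℝ)^2) from (Real.sqrt_sq (by positivity)).symm]
    exact Real.sqrt_le_sqrt (by exact_mod_cast hub i)
  have hchord : ∀ i, (s:ℝ) + (a i:ℝ) ≤ ((s:ℝ)+1) * Real.sqrt (a i) := by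
    intro i
    nlinarith [mul_nonneg (sub_nonneg.mpr (h1le i)) (sub_nonneg.mpr (hles i)), hsq i]
  have hTsum : ((t:ℝ) - 1) * s + ∑ i ∈ T, (a i:ℝ) ≤ ((s:ℝ)+1) * ∑ i ∈ T, Real.sqrt (a i) := by
    rw [Finset.mul_sum]
    calc ((t:ℝ)-1)*s + ∑ i ∈ T, (a i:ℝ) = ∑ i ∈ T, ((s:ℝ) + (a i:ℝ)) := by
          rw [Finset.sum_add_distrib, Finset.sum_const, hcard, nsmul_eq_mul]
          rw [Nat.cast_sub ht]
          push_cast; ring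
      _ ≤ _ := Finset.sum_le_sum (fun i _ => hchord i)
  -- the two big terms
  set x := Real.sqrt (a i0) with hxdef
  set y := Real.sqrt (a i1) with hydef
  have h36 : Real.sqrt (36:ℝ) = 6 := by
    rw [show (36:ℝ) = 6^2 by norm_num, Real.sqrt_sq (by norm_num)]
  have hx6 : (6:ℝ) ≤ x := by
    rw [← h36, hxdef]; exact Real.sqrt_le_sqrt (by exact_mod_cast h0')
  have hy6 : (6:ℝ) ≤ y := by
    rw [← h36, hydef]; exact Real.sqrt_le_sqrt (by exact_mod_cast h1')
  have hT0 : 0 ≤ ∑ i ∈ T, (a i : ℝ) := Finset.sum_nonneg (fun i _ => by positivity)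
  have hCub : (a i0 : ℝ) + (a i1:ℝ) ≤ (s:ℝ)^2 := by linarith
  have hxy : (a i0:ℝ) + (a i1:ℝ) + 4*s + 2 ≤ ((s:ℝ)+1) * (x + y) := by
    set u := x + y - 6 with hu
    have hu6 : (6:ℝ) ≤ u := by simp only [hu]; linarith
    have huC : (a i0:ℝ) + (a i1:ℝ) - 36 ≤ u^2 := by
      have hxx : x^2 = (a i0:ℝ) := hsq i0
      have hyy : y^2 = (a i1:ℝ) := hsq i1
      nlinarith [mul_nonneg (sub_nonneg.mpr hx6) (sub_nonneg.mpr hy6)]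
    set u1 := Real.sqrt ((s:ℝ)^2 - 36) with hu1def
    have hu1sq : u1^2 = (s:ℝ)^2 - 36 := Real.sq_sqrt (by nlinarith)
    have hu10 : (0:ℝ) ≤ u1 := Real.sqrt_nonneg _
    have hu1s : u1 ≤ (s:ℝ) := by
      have h := Real.sqrt_le_sqrt (show (s:ℝ)^2 - 36 ≤ (s:ℝ)^2 by linarith)
      rw [Real.sqrt_sq (by positivity : (0:ℝ) ≤ (s:ℝ))] at h
      exact h
    have key : (a i0:ℝ) + (a i1:ℝ) - 36 - 2*s + 32 ≤ ((s:ℝ)+1) * u := by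
      rcases le_total u u1 with hcase | hcase
      · have p1 : (0:ℝ) ≤ u * (u1 - u) := mul_nonneg (by linarith) (by linarith)
        have p2 : (0:ℝ) ≤ (u - 6) * ((s:ℝ) + 1 - u1) := mul_nonneg (by linarith) (by linarith)
        have p3 : 6 * u1 ≤ 8*(s:ℝ) - 26 := by nlinarith [sq_nonneg ((s:ℝ) - 8)]
        nlinarith [p1, p2, p3, huC]
      · have hu1ge : (s:ℝ) - 3 ≤ u1 := by
          rw [hu1def, show (s:ℝ) - 3 = Real.sqrt (((s:ℝ)-3)^2) from (Real.sqrt_sq (by linarith)).symm]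
          exact Real.sqrt_le_sqrt (by nlinarith)
        have q1 : (0:ℝ) ≤ ((s:ℝ)+1) * (u - u1) := mul_nonneg (by linarith) (by linarith)
        have q2 : (0:ℝ) ≤ ((s:ℝ)+1) * (u1 - ((s:ℝ) - 3)) := mul_nonneg (by linarith) (by linarith)
        nlinarith [q1, q2, hCub]
    nlinarith [key]
  have hkey : (s:ℝ)^2 + (t:ℝ)*s + 3*s + 2 ≤ ((s:ℝ)+1) * (x + y + ∑ i ∈ T, Real.sqrt (a i)) := by
    nlinarith [hxy, hTsum, hsumR]
  have hSS : ∑ i, Real.sqrt (a i) = x + y + ∑ i ∈ T, Real.sqrt (a i) :=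
    hsplit (fun i => Real.sqrt (a i))
  have hs0 : (0:ℝ) < (s:ℝ) := by positivity
  have h1s : 2*(t:ℝ)*(1 - 1/(s:ℝ)) + 4 = (2*(t:ℝ)*((s:ℝ)-1)*((s:ℝ)+1) + 4*(s:ℝ)*((s:ℝ)+1))/((s:ℝ)*((s:ℝ)+1)) := by
    field_simp
  rw [ge_iff_le, hSS, h1s, div_le_iff₀ (by positivity)]
  have ht0 : (1:ℝ) ≤ (t:ℝ) := by exact_mod_cast ht
  nlinarith [mul_le_mul_of_nonneg_left hkey (show (0:ℝ) ≤ 2*(s:ℝ) by positivity)]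
end

section
/- Let A be a finite nonempty subset of ℤ². Define the edge boundary ∂A as the set of pairs (x,y) with x ∈ A, y ∉ A, and x − y ∈ {(±1,0),(0,±1)}. Then |∂A| ≥ 4·√|A|. -/
/-- The edge boundary of a subset of `ℤ²`: pairs `(x, y)` with `x ∈ A`, `y ∉ A`,
adjacent in the grid lattice. -/
def edgeBoundary (A : Set (ℤ × ℤ)) : Set ((ℤ × ℤ) × (ℤ × ℤ)) :=
  {p | p.1 ∈ A ∧ p.2 ∉ A ∧
    p.1 - p.2 ∈ ({(1, 0), (-1, 0), (0, 1), (0, -1)} : Set (ℤ × ℤ))}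

/-!
Let `R` and `C` be the projections of `A` to the two axes, so that `|A| ≤ |R| |C|`. Every horizontal
line meeting `A` carries at least two boundary edges, one leaving `A` to the left and one to the right
(from the extreme points of `A` on that line), and likewise every vertical line. Hence
`|∂A| ≥ 2 |R| + 2 |C| ≥ 4 √(|R| |C|) ≥ 4 √|A|`.
-/

namespace Finset

def exitPoints {G : Type*} [AddGroup G] [DecidableEq G] (s : Finset G) (v : G) : Finset G :=
  s.filter fun x => x - v ∉ s

variable {G : Type*} [AddCommGroup G]

lemma exists_sub_nsmul_mem_and_sub_succ_nsmul_notMem [IsAddTorsionFree G] (s : Finset G)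
    {v : G} (hv : v ≠ 0) {a : G} (ha : a ∈ s) :
    ∃ k : ℕ, a - k • v ∈ s ∧ a - (k + 1) • v ∉ s := by
  by_contra! hstep
  have hall : ∀ k : ℕ, a - k • v ∈ s := fun k => by
    induction k with
    | zero => simpa using ha
    | succ k ih => exact hstep k ih
  have hinj : Function.Injective fun k : ℕ => (⟨a - k • v, hall k⟩ : s) := fun m n hmn =>
    injective_nsmul_iff_not_isOfFinAddOrder.2 (not_isOfFinAddOrder_of_isAddTorsionFree hv)
      (sub_right_injective (congrArg Subtype.val hmn))
  exact not_injective_infinite_finite _ hinj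

/-- Each fibre of a function constant along `v`-lines contains an exit point in direction `v`. -/
lemma card_image_le_card_exitPoints [DecidableEq G] [IsAddTorsionFree G] {β : Type*}
    [DecidableEq β] (s : Finset G) {v : G} (hv : v ≠ 0) (f : G → β) (hf : ∀ x, f (x - v) = f x) :
    (s.image f).card ≤ (s.exitPoints v).card := by
  refine card_le_card_of_surjOn f ?_
  intro b hb
  obtain ⟨a, ha, rfl⟩ := mem_image.1 hb
  obtain ⟨k, hk, hk'⟩ := exists_sub_nsmul_mem_and_sub_succ_nsmul_notMem s hv ha
  have hfk : ∀ n : ℕ, f (a - n • v) = f a := fun n => by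
    induction n with
    | zero => simp
    | succ n ih => rw [succ_nsmul, ← sub_sub, hf, ih]
  refine ⟨a - k • v, mem_filter.2 ⟨hk, ?_⟩, hfk k⟩
  rwa [sub_sub, ← succ_nsmul]

end Finset

open Finset

def gridDirections : Finset (ℤ × ℤ) := {(1, 0), (-1, 0), (0, 1), (0, -1)}

lemma edgeBoundary_coe_eq_biUnion (s : Finset (ℤ × ℤ)) :
    edgeBoundary s =
      ↑(gridDirections.biUnion fun v => (s.exitPoints v).image fun x => (x, x - v)) := by
  ext ⟨x, y⟩
  simp only [edgeBoundary, gridDirections, Set.mem_ofPred_eq, coe_biUnion, coe_image,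
    Set.mem_iUnion, Set.mem_image, mem_coe, exitPoints, mem_filter, Prod.mk.injEq, exists_prop]
  constructor
  · rintro ⟨hx, hy, hxy⟩
    refine ⟨x - y, by simpa using hxy, x, ⟨hx, by simpa using hy⟩, rfl, by abel⟩
  · rintro ⟨v, hv, x, ⟨hx, hxv⟩, rfl, rfl⟩
    exact ⟨hx, hxv, by simpa using hv⟩

lemma ncard_edgeBoundary_coe (s : Finset (ℤ × ℤ)) :
    (edgeBoundary s).ncard = ∑ v ∈ gridDirections, (s.exitPoints v).card := by
  rw [edgeBoundary_coe_eq_biUnion, Set.ncard_coe_finset, card_biUnion]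
  · exact sum_congr rfl fun v _ => card_image_of_injective _ fun x y hxy => congrArg Prod.fst hxy
  · intro v _ w _ hvw
    simp only [Function.onFun, disjoint_left, mem_image]
    rintro _ ⟨x, _, rfl⟩ ⟨y, _, hyx⟩
    simp only [Prod.mk.injEq] at hyx
    exact hvw (by rw [← sub_sub_cancel x v, ← hyx.2, hyx.1, sub_sub_cancel])

lemma two_mul_card_add_two_mul_card_le_ncard_edgeBoundary (s : Finset (ℤ × ℤ)) :
    2 * (s.image Prod.snd).card + 2 * (s.image Prod.fst).card ≤ (edgeBoundary s).ncard := by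
  rw [ncard_edgeBoundary_coe, gridDirections, sum_insert (by decide), sum_insert (by decide),
    sum_insert (by decide), sum_singleton]
  have h₁ := s.card_image_le_card_exitPoints (v := (1, 0)) (by decide) Prod.snd (by simp)
  have h₂ := s.card_image_le_card_exitPoints (v := (-1, 0)) (by decide) Prod.snd (by simp)
  have h₃ := s.card_image_le_card_exitPoints (v := (0, 1)) (by decide) Prod.fst (by simp)
  have h₄ := s.card_image_le_card_exitPoints (v := (0, -1)) (by decide) Prod.fst (by simp)
  omega

lemma Real.four_mul_sqrt_le_of_le_mul {a c r : ℝ} (hc : 0 ≤ c) (hr : 0 ≤ r) (h : a ≤ c * r) :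
    4 * √a ≤ 2 * r + 2 * c := by
  have hsqrt : √a ≤ √c * √r := by rw [← Real.sqrt_mul hc]; exact Real.sqrt_le_sqrt h
  have hamgm := two_mul_le_add_sq (√c) (√r)
  rw [Real.sq_sqrt hc, Real.sq_sqrt hr] at hamgm
  linarith

theorem stmt_8_general (A : Set (ℤ × ℤ)) (hfin : A.Finite) :
    ((edgeBoundary A).ncard : ℝ) ≥ 4 * Real.sqrt A.ncard := by
  lift A to Finset (ℤ × ℤ) using hfin
  have hgrid : A.card ≤ (A.image Prod.fst).card * (A.image Prod.snd).card :=
    (card_le_card subset_product).trans (card_product _ _).le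
  have hboundary := two_mul_card_add_two_mul_card_le_ncard_edgeBoundary A
  rw [Set.ncard_coe_finset, ge_iff_le]
  calc 4 * √(A.card : ℝ)
      ≤ 2 * (A.image Prod.snd).card + 2 * (A.image Prod.fst).card :=
        Real.four_mul_sqrt_le_of_le_mul (Nat.cast_nonneg _) (Nat.cast_nonneg _)
          (by exact_mod_cast hgrid)
    _ ≤ (edgeBoundary A).ncard := by exact_mod_cast hboundary

theorem stmt_8 (A : Set (ℤ × ℤ)) (hfin : A.Finite) (hne : A.Nonempty) :
    ((edgeBoundary A).ncard : ℝ) ≥ 4 * Real.sqrt A.ncard :=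
  stmt_8_general A hfin
end

section
/- If a finite nonempty subset W of ℤ² has at least 2 elements and is connected (under lattice adjacency), then its edge boundary has size at least 6. -/
open AddSubgroup

theorem Set.Finite.exists_mem_sub_mem_zmultiples_add_notMem {G : Type*} [AddCommGroup G]
    [IsAddTorsionFree G] {W : Set G} (hW : W.Finite) {p v : G} (hp : p ∈ W) (hv : v ≠ 0) : ∃ x ∈ W, x - p ∈ zmultiples v ∧ x + v ∉ W := by
  by_contra! h
  have hray : ∀ n : ℕ, p + n • v ∈ W := by
    intro n
    induction n with
    | zero => simpa using hp
    | succ n ih => simpa [succ_nsmul, add_assoc] using h _ ih ⟨n, by simp⟩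
  have hinj : Function.Injective fun n : ℕ => p + n • v :=
    (add_right_injective p).comp
      (injective_nsmul_iff_not_isOfFinAddOrder.mpr (not_isOfFinAddOrder_of_isAddTorsionFree hv))
  exact Set.infinite_of_injective_forall_mem hinj hray hW

theorem ne_of_sub_mem_zmultiples {G : Type*} [AddCommGroup G] {p q x y v : G}
    (hx : x - p ∈ zmultiples v) (hy : y - q ∈ zmultiples v) (hpq : p - q ∉ zmultiples v) :
    x ≠ y := by
  rintro rfl
  exact hpq (by simpa using sub_mem hy hx)

theorem injective_mk_fst_add_snd {G : Type*} [AddGroup G] :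
    Function.Injective fun xu : G × G => (xu.1, xu.1 + xu.2) := by
  rintro ⟨x, u⟩ ⟨y, w⟩ h
  simp only [Prod.mk.injEq] at h
  obtain ⟨rfl, h⟩ := h
  simpa using h

def gridDirs : Set (ℤ × ℤ) := {(1, 0), (-1, 0), (0, 1), (0, -1)}

theorem mem_edgeBoundary {W : Set (ℤ × ℤ)} {e : (ℤ × ℤ) × (ℤ × ℤ)} :
    e ∈ edgeBoundary W ↔ e.1 ∈ W ∧ e.2 ∉ W ∧ e.1 - e.2 ∈ gridDirs :=
  Iff.rfl

theorem finite_gridDirs : gridDirs.Finite := by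
  simp [gridDirs]

theorem neg_mem_gridDirs {u : ℤ × ℤ} (hu : u ∈ gridDirs) : -u ∈ gridDirs := by
  rcases hu with rfl | rfl | rfl | rfl <;> simp [gridDirs]

theorem ne_neg_of_mem_gridDirs {u : ℤ × ℤ} (hu : u ∈ gridDirs) : u ≠ -u := by
  rcases hu with rfl | rfl | rfl | rfl <;> decide

theorem ne_zero_of_mem_gridDirs {u : ℤ × ℤ} (hu : u ∈ gridDirs) : u ≠ 0 := by
  rcases hu with rfl | rfl | rfl | rfl <;> decide

theorem edgeBoundary_finite {W : Set (ℤ × ℤ)} (hW : W.Finite) : (edgeBoundary W).Finite := by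
  refine (hW.prod (hW.sub finite_gridDirs)).subset ?_
  rintro ⟨x, y⟩ ⟨hx, -, hxy : x - y ∈ gridDirs⟩
  exact ⟨hx, x, hx, x - y, hxy, sub_sub_cancel x y⟩

theorem length_le_ncard_edgeBoundary {W : Set (ℤ × ℤ)} (hW : W.Finite)
    {l : List ((ℤ × ℤ) × (ℤ × ℤ))} (hl : l.Nodup)
    (hexit : ∀ xu ∈ l, xu.1 ∈ W ∧ xu.1 + xu.2 ∉ W ∧ xu.2 ∈ gridDirs) :
    l.length ≤ (edgeBoundary W).ncard := by
  have hsub : ↑(l.map fun xu => (xu.1, xu.1 + xu.2)).toFinset ⊆ edgeBoundary W := by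
    intro e he
    obtain ⟨⟨x, u⟩, hxu, rfl⟩ := List.mem_map.1 (List.mem_toFinset.1 he)
    obtain ⟨hx, hxu, hu⟩ := hexit _ hxu
    exact mem_edgeBoundary.2 ⟨hx, hxu, by simpa using neg_mem_gridDirs hu⟩
  calc l.length = (l.map fun xu => (xu.1, xu.1 + xu.2)).toFinset.card := by
        rw [List.toFinset_card_of_nodup (hl.map injective_mk_fst_add_snd), List.length_map]
    _ ≤ (edgeBoundary W).ncard := by
      rw [← Set.ncard_coe_finset]
      exact Set.ncard_le_ncard hsub (edgeBoundary_finite hW)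

theorem six_le_ncard_edgeBoundary {W : Set (ℤ × ℤ)} (hW : W.Finite) {p q v w : ℤ × ℤ}
    (hp : p ∈ W) (hq : q ∈ W) (hpq : p - q ∉ zmultiples v) (hv : v ∈ gridDirs)
    (hw : w ∈ gridDirs) (hwv : w ≠ v) (hwnv : w ≠ -v) : 6 ≤ (edgeBoundary W).ncard := by
  have exit {x u} (hx : x ∈ W) (hu : u ∈ gridDirs) :=
    hW.exists_mem_sub_mem_zmultiples_add_notMem hx (ne_zero_of_mem_gridDirs hu)
  obtain ⟨a, haW, hap, haN⟩ := exit hp hv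
  obtain ⟨b, hbW, hbp, hbN⟩ := exit hp (neg_mem_gridDirs hv)
  obtain ⟨c, hcW, hcq, hcN⟩ := exit hq hv
  obtain ⟨d, hdW, hdq, hdN⟩ := exit hq (neg_mem_gridDirs hv)
  obtain ⟨e, heW, -, heN⟩ := exit hp hw
  obtain ⟨f, hfW, -, hfN⟩ := exit hp (neg_mem_gridDirs hw)
  rw [zmultiples_neg] at hbp hdq
  have hac : a ≠ c := ne_of_sub_mem_zmultiples hap hcq hpq
  have hbd : b ≠ d := ne_of_sub_mem_zmultiples hbp hdq hpq
  have hvw : v ≠ -w := by rintro rfl; simp at hwnv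
  have hnodup : [(a, v), (c, v), (b, -v), (d, -v), (e, w), (f, -w)].Nodup := by
    simp [hac, hbd, ne_neg_of_mem_gridDirs hv, ne_neg_of_mem_gridDirs hw, hwv.symm, hwnv.symm,
      hvw, neg_eq_iff_eq_neg]
  refine length_le_ncard_edgeBoundary hW hnodup ?_
  simp only [List.forall_mem_cons, List.not_mem_nil, IsEmpty.forall_iff, implies_true, and_true]
  exact ⟨⟨haW, haN, hv⟩, ⟨hcW, hcN, hv⟩, ⟨hbW, hbN, neg_mem_gridDirs hv⟩,
    ⟨hdW, hdN, neg_mem_gridDirs hv⟩, ⟨heW, heN, hw⟩, ⟨hfW, hfN, neg_mem_gridDirs hw⟩⟩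

theorem stmt_10_general (W : Set (ℤ × ℤ)) (hfin : W.Finite) (hcard : 2 ≤ W.ncard) :
    6 ≤ (edgeBoundary W).ncard := by
  obtain ⟨p, q, hp, hq, hpq⟩ := (Set.one_lt_ncard_iff hfin).mp hcard
  by_cases hsnd : p.2 = q.2
  · refine six_le_ncard_edgeBoundary hfin hp hq (v := (0, 1)) (w := (1, 0)) ?_
      (by simp [gridDirs]) (by simp [gridDirs]) (by decide) (by decide)
    rintro ⟨k, hk⟩
    exact hpq (Prod.ext (by simpa [sub_eq_zero] using congrArg Prod.fst hk.symm) hsnd)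
  · refine six_le_ncard_edgeBoundary hfin hp hq (v := (1, 0)) (w := (0, 1)) ?_
      (by simp [gridDirs]) (by simp [gridDirs]) (by decide) (by decide)
    rintro ⟨k, hk⟩
    exact hsnd (by simpa [sub_eq_zero] using congrArg Prod.snd hk.symm)

theorem stmt_10 (W : Set (ℤ × ℤ)) (hfin : W.Finite) (hcard : 2 ≤ W.ncard)
    (hconn : ∀ x ∈ W, ∀ y ∈ W, Relation.ReflTransGen
      (fun a b => a ∈ W ∧ b ∈ W ∧
        a - b ∈ ({(1, 0), (-1, 0), (0, 1), (0, -1)} : Set (ℤ × ℤ))) x y) :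
    6 ≤ (edgeBoundary W).ncard :=
  stmt_10_general W hfin hcard
end

section
/- Let x : Fin t → ℝ≥0 with ∑ x_i = S and each x_i ≥ 1, where t ≤ S. Then ∑ √(x_i) ≥ (t − 1) + √(S − t + 1). -/
lemma key_sqrt_s14 (a b : ℝ) (ha : 1 ≤ a) (hb : 1 ≤ b) :
    1 + Real.sqrt (a + b - 1) ≤ Real.sqrt a + Real.sqrt b := by
  have ha0 : (0:ℝ) ≤ a := by linarith
  have hb0 : (0:ℝ) ≤ b := by linarith
  have hc0 : (0:ℝ) ≤ a + b - 1 := by linarith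
  have hsa := Real.sq_sqrt ha0
  have hsb := Real.sq_sqrt hb0
  have hsc := Real.sq_sqrt hc0
  have hab : a + b - 1 ≤ a * b := by nlinarith
  have h1 : Real.sqrt (a + b - 1) ≤ Real.sqrt a * Real.sqrt b := by
    rw [← Real.sqrt_mul ha0]
    exact Real.sqrt_le_sqrt hab
  have h2 : (0:ℝ) ≤ Real.sqrt a := Real.sqrt_nonneg a
  have h3 : (0:ℝ) ≤ Real.sqrt b := Real.sqrt_nonneg b
  have h4 : (0:ℝ) ≤ Real.sqrt (a + b - 1) := Real.sqrt_nonneg _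
  nlinarith [sq_nonneg (Real.sqrt a + Real.sqrt b - 1 - Real.sqrt (a + b - 1)),
    sq_nonneg (Real.sqrt a - 1), sq_nonneg (Real.sqrt b - 1)]

theorem stmt_14 (t : ℕ) (S : ℝ) (x : Fin t → ℝ)
    (hx1 : ∀ i, 1 ≤ x i) (hsum : ∑ i, x i = S) (ht : (t : ℝ) ≤ S) :
    ∑ i, Real.sqrt (x i) ≥ ((t : ℝ) - 1) + Real.sqrt (S - t + 1) := by
  induction t generalizing S with
  | zero =>
    simp at hsum
    subst hsum
    simp [Real.sqrt_one]
  | succ t ih =>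
    set y : Fin t → ℝ := fun i => x i.succ with hy
    have hy1 : ∀ i, 1 ≤ y i := fun i => hx1 i.succ
    have hS' : ∑ i, y i = S - x 0 := by
      have := Fin.sum_univ_succ x
      rw [hsum] at this
      simp [hy]; linarith
    have htS' : (t : ℝ) ≤ ∑ i, y i := by
      calc (t : ℝ) = ∑ _i : Fin t, (1:ℝ) := by simp
        _ ≤ ∑ i, y i := Finset.sum_le_sum fun i _ => hy1 i
    have IH := ih (∑ i, y i) y hy1 rfl htS'
    rw [hS'] at IH
    rw [Fin.sum_univ_succ (fun i => Real.sqrt (x i))]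
    have hx0 : 1 ≤ x 0 := hx1 0
    have hb : 1 ≤ S - x 0 - t + 1 := by rw [hS'] at htS'; linarith
    have key := key_sqrt_s14 (x 0) (S - x 0 - t + 1) hx0 hb
    have heq : x 0 + (S - x 0 - t + 1) - 1 = S - (t + 1 : ℕ) + 1 := by
      push_cast; ring
    rw [heq] at key
    push_cast at key
    push_cast
    have : ∑ i : Fin t, Real.sqrt (y i) = ∑ i : Fin t, Real.sqrt (x i.succ) := rfl
    rw [this] at IH
    linarith
end
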